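/- Under the fixed branch convention for √(1−w²), the normalized associated Legendre function of complex argument satisfies P̂_n^m(−w) = (−1)^n P̂_n^m(w) for every w ∈ ℂ ∖ [−1, 1] and all integers n ≥ 0, |m| ≤ n. -/

import Mathlib

open Complex MeasureTheory Filter Set Polynomial

noncomputable section

/-- Modified spherical Bessel function of the first kind
`i_n(z) = Σ_{k} z^{n+2k}/(2^k k! (2n+2k+1)!!)`. -/
def msbI (n : ℕ) (z : ℂ) : ℂ :=
  ∑' k : ℕ, z ^ (n + 2 * k) /
    ((2 ^ k * Nat.factorial k * Nat.doubleFactorial (2 * n + 2 * k + 1) : ℕ) : ℂ)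

/-- Modified spherical Bessel function of the second kind
`k_n(z) = (π/(2z)) e^{−z} Σ_{k=0}^n (n+k)!/(k!(n−k)!(2z)^k)`. -/
def msbK (n : ℕ) (z : ℂ) : ℂ :=
  ((Real.pi : ℂ) / (2 * z)) * Complex.exp (-z) *
    ∑ k ∈ Finset.range (n + 1),
      ((Nat.factorial (n + k) : ℂ) /
        (((Nat.factorial k * Nat.factorial (n - k) : ℕ) : ℂ) * (2 * z) ^ k))

/-- Spherical Bessel function of the first kind
`j_n(z) = Σ_{k} (−1)^k z^{n+2k}/(2^k k! (2n+2k+1)!!)`. -/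
def sphJ (n : ℕ) (z : ℂ) : ℂ :=
  ∑' k : ℕ, (-1) ^ k * z ^ (n + 2 * k) /
    ((2 ^ k * Nat.factorial k * Nat.doubleFactorial (2 * n + 2 * k + 1) : ℕ) : ℂ)

/-- Bessel function of the first kind of integer order `q`. -/
def besselJ (q : ℕ) (x : ℝ) : ℝ :=
  ∑' k : ℕ, (-1) ^ k * (x / 2) ^ (2 * k + q) /
    ((Nat.factorial k * Nat.factorial (k + q) : ℕ) : ℝ)

/-- The degree-`n` Legendre polynomial (over `ℂ`), via the Rodrigues formula. -/
def legendreC (n : ℕ) : Polynomial ℂ :=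
  Polynomial.C (((2 ^ n * Nat.factorial n : ℕ) : ℂ))⁻¹ *
    Polynomial.derivative^[n] ((Polynomial.X ^ 2 - 1) ^ n)

/-- The fixed branch of `√(k² − kz²)`:
`√(k²−kz²) = −i √(r₁ r₂) e^{i(ϑ₁+ϑ₂)/2}` where `kz+k = r₁ e^{iϑ₁}`, `kz−k = r₂ e^{iϑ₂}`,
with `−π < ϑ₁, ϑ₂ ≤ π`. -/
def branchSqrt (k kz : ℂ) : ℂ :=
  -Complex.I * ((Real.sqrt (‖kz + k‖ * ‖kz - k‖) : ℝ) : ℂ) *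
    Complex.exp (Complex.I * ((((kz + k).arg + (kz - k).arg) / 2 : ℝ) : ℂ))

/-- Associated Legendre function `P_n^m(w) = (−1)^m (√(1−w²))^m dᵐP_n/dwᵐ (w)` for `m ≥ 0`,
with a prescribed value `sq` of the square root `√(1−w²)`. -/
def assocLegendreWith (n mm : ℕ) (w sq : ℂ) : ℂ :=
  (-1) ^ mm * sq ^ mm * (Polynomial.derivative^[mm] (legendreC n)).eval w

/-- Associated Legendre function for integer order `m`, using
`P_n^{−m} = (−1)^m ((n−m)!/(n+m)!) P_n^m` for `m ≥ 0`. -/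
def assocLegendreIntWith (n : ℕ) (m : ℤ) (w sq : ℂ) : ℂ :=
  if 0 ≤ m then assocLegendreWith n m.toNat w sq
  else (-1) ^ m.natAbs *
      ((Nat.factorial (n - m.natAbs) : ℂ) / (Nat.factorial (n + m.natAbs) : ℂ)) *
      assocLegendreWith n m.natAbs w sq

/-- Normalized associated Legendre function
`P̂_n^m(w) = (−1)^m √((2n+1)/(4π) · (n−m)!/(n+m)!) P_n^m(w)`, with a prescribed value `sq`
of the square root `√(1−w²)`. -/
def PhatWith (n : ℕ) (m : ℤ) (w sq : ℂ) : ℂ :=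
  (-1 : ℂ) ^ m *
    ((Real.sqrt ((2 * n + 1) / (4 * Real.pi) *
        ((Nat.factorial ((n : ℤ) - m).toNat : ℝ) / (Nat.factorial ((n : ℤ) + m).toNat : ℝ))) : ℝ) : ℂ) *
    assocLegendreIntWith n m w sq

/-- Normalized associated Legendre function of complex argument, with the fixed branch of
`√(1−w²)`. -/
def Phat (n : ℕ) (m : ℤ) (w : ℂ) : ℂ := PhatWith n m w (branchSqrt 1 w)

/-- Spherical harmonic `Y_n^m(θ, φ) = P̂_n^m(cos θ) e^{imφ}` (real-argument convention,
`√(1−cos²θ) ≥ 0`). -/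
def sphY (n : ℕ) (m : ℤ) (θ φ : ℝ) : ℂ :=
  PhatWith n m ((Real.cos θ : ℝ) : ℂ) ((Real.sqrt (1 - Real.cos θ ^ 2) : ℝ) : ℂ) *
    Complex.exp (Complex.I * m * φ)

/-- Gaunt coefficient `𝒢(n,m;ν,μ;q) = ∫_{S²} Y_n^m Y_ν^μ conj(Y_q^{m+μ}) dω`. -/
def gaunt (n : ℕ) (m : ℤ) (ν : ℕ) (μ : ℤ) (q : ℕ) : ℂ :=
  ∫ θ in (0:ℝ)..Real.pi, ∫ φ in (0:ℝ)..(2 * Real.pi),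
    sphY n m θ φ * sphY ν μ θ φ * starRingEnd ℂ (sphY q (m + μ) θ φ) * ((Real.sin θ : ℝ) : ℂ)

/-- Cartesian coordinates of the point with spherical coordinates `(r, θ, φ)`. -/
def sphToCart (r θ φ : ℝ) : ℝ × ℝ × ℝ :=
  (r * Real.sin θ * Real.cos φ, r * Real.sin θ * Real.sin φ, r * Real.cos θ)

/-- Euclidean norm on `ℝ³ = ℝ × ℝ × ℝ`. -/
def norm3 (v : ℝ × ℝ × ℝ) : ℝ := Real.sqrt (v.1 ^ 2 + v.2.1 ^ 2 + v.2.2 ^ 2)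


lemma iterDeriv_comp_negX (p : ℂ[X]) (k : ℕ) :
    derivative^[k] (p.comp (-X)) = (-1) ^ k * (derivative^[k] p).comp (-X) := by
  induction k with
  | zero => simp
  | succ k ih =>
    rw [Function.iterate_succ_apply', Function.iterate_succ_apply', ih]
    rw [derivative_mul, derivative_comp]
    have hC : derivative ((-1 : ℂ[X]) ^ k) = 0 := by
      rw [← C_1, ← map_neg, ← map_pow, derivative_C]
    rw [hC]
    simp [pow_succ]

lemma legendreC_comp_negX (n : ℕ) :
    (legendreC n).comp (-X) = (-1) ^ n * legendreC n := by
  have hp : ((X ^ 2 - 1 : ℂ[X]) ^ n).comp (-X) = (X ^ 2 - 1) ^ n := by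
    simp [pow_comp, sub_comp, pow_comp, neg_pow]
  have h := iterDeriv_comp_negX ((X ^ 2 - 1 : ℂ[X]) ^ n) n
  rw [hp] at h
  have h2 : ((-1 : ℂ[X]) ^ n) * ((-1 : ℂ[X]) ^ n) = 1 := by
    rw [← pow_add, ← two_mul, pow_mul]; norm_num
  have h' : ((derivative^[n] ((X ^ 2 - 1 : ℂ[X]) ^ n)).comp (-X))
      = (-1) ^ n * derivative^[n] ((X ^ 2 - 1 : ℂ[X]) ^ n) := by
    conv_rhs => rw [h]
    rw [← mul_assoc, h2, one_mul]
  unfold legendreC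
  rw [mul_comp, C_comp, h']
  ring

lemma legendre_eval_neg (n mm : ℕ) (w : ℂ) :
    (derivative^[mm] (legendreC n)).eval (-w)
      = (-1) ^ (n + mm) * (derivative^[mm] (legendreC n)).eval w := by
  have h := iterDeriv_comp_negX (legendreC n) mm
  rw [legendreC_comp_negX] at h
  have h3 : derivative^[mm] ((-1 : ℂ[X]) ^ n * legendreC n)
      = (-1) ^ n * derivative^[mm] (legendreC n) := by
    have hc : ((-1 : ℂ[X]) ^ n) = C ((-1 : ℂ) ^ n) := by simp
    rw [hc, Polynomial.iterate_derivative_C_mul]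
  rw [h3] at h
  have key : (-1 : ℂ) ^ mm * (derivative^[mm] (legendreC n)).eval (-w)
      = (-1) ^ n * (derivative^[mm] (legendreC n)).eval w := by
    have := congrArg (eval w) h.symm
    simpa [eval_comp] using this
  have h4 : ((-1 : ℂ) ^ mm) * ((-1 : ℂ) ^ mm) = 1 := by
    rw [← pow_add, ← two_mul, pow_mul]; norm_num
  rw [pow_add]
  calc (derivative^[mm] (legendreC n)).eval (-w)
      = (-1) ^ mm * ((-1 : ℂ) ^ mm * (derivative^[mm] (legendreC n)).eval (-w)) := by
        rw [← mul_assoc, h4, one_mul]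
    _ = (-1) ^ mm * ((-1 : ℂ) ^ n * (derivative^[mm] (legendreC n)).eval w) := by rw [key]
    _ = (-1) ^ n * (-1) ^ mm * (derivative^[mm] (legendreC n)).eval w := by ring

lemma branch_neg (w : ℂ) (hw : w ∉ (fun x : ℝ => (x : ℂ)) '' Set.Icc (-1 : ℝ) 1) :
    branchSqrt 1 (-w) = -branchSqrt 1 w := by
  have h1 : (-w) + 1 = -(w - 1) := by ring
  have h2 : (-w) - 1 = -(w + 1) := by ring
  have key : ∃ s : ℝ, (s = 1 ∨ s = -1) ∧
      (-(w - 1)).arg + (-(w + 1)).arg = (w + 1).arg + (w - 1).arg + s * (2 * Real.pi) := by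
    rcases lt_trichotomy w.im 0 with him | him | him
    · refine ⟨1, Or.inl rfl, ?_⟩
      have ha : (-(w - 1)).arg = (w - 1).arg + Real.pi :=
        arg_neg_eq_arg_add_pi_of_im_neg (by simpa using him)
      have hb : (-(w + 1)).arg = (w + 1).arg + Real.pi :=
        arg_neg_eq_arg_add_pi_of_im_neg (by simpa using him)
      rw [ha, hb]; ring
    · have hre : 1 < w.re ∨ w.re < -1 := by
        by_contra hc
        push_neg at hc
        exact hw ⟨w.re, ⟨by linarith [hc.2], hc.1⟩, by
          apply Complex.ext <;> simp [him]⟩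
      rcases hre with hre | hre
      · refine ⟨1, Or.inl rfl, ?_⟩
        have ha : (-(w - 1)).arg = Real.pi := by
          rw [arg_eq_pi_iff]; constructor <;> simp [him] <;> linarith
        have hb : (-(w + 1)).arg = Real.pi := by
          rw [arg_eq_pi_iff]; constructor <;> simp [him] <;> linarith
        have hc : (w + 1).arg = 0 := by
          rw [arg_eq_zero_iff]; constructor <;> simp [him] <;> linarith
        have hd : (w - 1).arg = 0 := by
          rw [arg_eq_zero_iff]; constructor <;> simp [him] <;> linarith
        rw [ha, hb, hc, hd]; ring
      · refine ⟨-1, Or.inr rfl, ?_⟩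
        have ha : (-(w - 1)).arg = 0 := by
          rw [arg_eq_zero_iff]; constructor <;> simp [him] <;> linarith
        have hb : (-(w + 1)).arg = 0 := by
          rw [arg_eq_zero_iff]; constructor <;> simp [him] <;> linarith
        have hc : (w + 1).arg = Real.pi := by
          rw [arg_eq_pi_iff]; constructor <;> simp [him] <;> linarith
        have hd : (w - 1).arg = Real.pi := by
          rw [arg_eq_pi_iff]; constructor <;> simp [him] <;> linarith
        rw [ha, hb, hc, hd]; ring
    · refine ⟨-1, Or.inr rfl, ?_⟩
      have ha : (-(w - 1)).arg = (w - 1).arg - Real.pi :=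
        arg_neg_eq_arg_sub_pi_of_im_pos (by simpa using him)
      have hb : (-(w + 1)).arg = (w + 1).arg - Real.pi :=
        arg_neg_eq_arg_sub_pi_of_im_pos (by simpa using him)
      rw [ha, hb]; ring
  obtain ⟨s, hs, hsum⟩ := key
  unfold branchSqrt
  rw [h1, h2, norm_neg, norm_neg, hsum]
  rw [mul_comm ‖w - 1‖]
  have hexp : Complex.exp (Complex.I * ((((w + 1).arg + (w - 1).arg + s * (2 * Real.pi)) / 2 : ℝ) : ℂ))
      = - Complex.exp (Complex.I * ((((w + 1).arg + (w - 1).arg) / 2 : ℝ) : ℂ)) := by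
    have harg : ((((w + 1).arg + (w - 1).arg + s * (2 * Real.pi)) / 2 : ℝ) : ℂ)
        = ((((w + 1).arg + (w - 1).arg) / 2 : ℝ) : ℂ) + (s : ℂ) * Real.pi := by
      push_cast; ring
    rw [harg, mul_add, Complex.exp_add]
    rcases hs with hs | hs <;> subst hs <;> push_cast
    · rw [show Complex.I * (1 * (Real.pi : ℂ)) = (Real.pi : ℂ) * Complex.I by ring,
        Complex.exp_pi_mul_I]; ring
    · rw [show Complex.I * (-1 * (Real.pi : ℂ)) = -((Real.pi : ℂ) * Complex.I) by ring,
        Complex.exp_neg, Complex.exp_pi_mul_I]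
      norm_num
  rw [hexp]; ring

lemma aLW_neg (n mm : ℕ) (w sq : ℂ) :
    assocLegendreWith n mm (-w) (-sq) = (-1) ^ n * assocLegendreWith n mm w sq := by
  unfold assocLegendreWith
  rw [legendre_eval_neg, neg_pow sq, pow_add]
  rcases Nat.even_or_odd mm with h | h <;>
    simp [h.neg_one_pow, Odd.neg_one_pow] <;> ring

lemma aLIW_neg (n : ℕ) (m : ℤ) (w sq : ℂ) :
    assocLegendreIntWith n m (-w) (-sq) = (-1) ^ n * assocLegendreIntWith n m w sq := by
  unfold assocLegendreIntWith
  split <;> rw [aLW_neg] <;> ring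

/-- with the fixed branch of `√(1−w²)`, the normalized associated Legendre
function satisfies `P̂_n^m(−w) = (−1)^n P̂_n^m(w)` for every `w ∈ ℂ ∖ [−1, 1]`. -/
theorem stmt12 (w : ℂ) (hw : w ∉ (fun x : ℝ => (x : ℂ)) '' Set.Icc (-1 : ℝ) 1)
    (n : ℕ) (m : ℤ) (hm : m.natAbs ≤ n) :
    Phat n m (-w) = (-1 : ℂ) ^ n * Phat n m w := by
  unfold Phat
  rw [branch_neg w hw]
  unfold PhatWith
  rw [aLIW_neg]
  ring
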